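/- arXiv:2108.04959 — 5 statements merged into one kernel-verified Lean document; each statement's English description precedes it below -/
import Mathlib

section
/- Let f : [0,1] → 2^[0,1] be upper semicontinuous, light, almost nonfissile, with the intermediate value property. If D ⊆ [0,1] is open and G ⊆ D is a G_δ subset of [0,1] contained in D, then {x ∈ [0,1] : f(x) ⊆ G} is a G_δ subset of [0,1]. Moreover, if G is dense in D, then {x : f(x) ⊆ G} is dense in {x : f(x) ⊆ D}. -/
open Set Filter Topology

/-- The graph of a set-valued function on `[0,1]`. -/
def SVGraph (f : ℝ → Set ℝ) : Set (ℝ × ℝ) :=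
  {p | p.1 ∈ Icc (0:ℝ) 1 ∧ p.2 ∈ f p.1}

/-- Upper semicontinuous set-valued function `[0,1] → 2^[0,1]`:
nonempty compact values inside `[0,1]` and closed graph. -/
def USC (f : ℝ → Set ℝ) : Prop :=
  (∀ x ∈ Icc (0:ℝ) 1, (f x).Nonempty ∧ f x ⊆ Icc (0:ℝ) 1 ∧ IsCompact (f x)) ∧
    IsClosed (SVGraph f)

/-- The intermediate value property. -/
def IVP (f : ℝ → Set ℝ) : Prop :=
  ∀ x₁ ∈ Icc (0:ℝ) 1, ∀ x₂ ∈ Icc (0:ℝ) 1, x₁ ≠ x₂ →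
    ∀ y₁ ∈ f x₁, ∀ y₂ ∈ f x₂, y₁ ≠ y₂ →
      ∀ y ∈ Ioo (min y₁ y₂) (max y₁ y₂),
        ∃ x ∈ Ioo (min x₁ x₂) (max x₁ x₂), y ∈ f x

/-- The weak intermediate value property. -/
def WIVP (f : ℝ → Set ℝ) : Prop :=
  ∀ x₁ ∈ Icc (0:ℝ) 1, ∀ x₂ ∈ Icc (0:ℝ) 1, x₁ ≠ x₂ →
    ∀ y₁ ∈ f x₁, ∃ y₂ ∈ f x₂,
      ∀ y ∈ Icc (min y₁ y₂) (max y₁ y₂),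
        ∃ x ∈ Icc (min x₁ x₂) (max x₁ x₂), y ∈ f x

/-- Weak continuity (from the left and the right) at each interior point. -/
def WeakCont (f : ℝ → Set ℝ) : Prop :=
  ∀ x ∈ Ioo (0:ℝ) 1, ∀ y ∈ f x,
    (∃ u : ℕ → ℝ × ℝ, (∀ k, u k ∈ SVGraph f ∧ (u k).1 < x) ∧
      Tendsto u atTop (𝓝 (x, y))) ∧
    (∃ u : ℕ → ℝ × ℝ, (∀ k, u k ∈ SVGraph f ∧ x < (u k).1) ∧
      Tendsto u atTop (𝓝 (x, y)))

/-- `f` is almost nonfissile: the nonfissile points of the graph are dense in the graph. -/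
def AlmostNonfissile (f : ℝ → Set ℝ) : Prop :=
  SVGraph f ⊆ closure {p | p ∈ SVGraph f ∧ f p.1 = {p.2}}

/-- `f` is light: each fiber `{x : y ∈ f x}` has empty interior in `[0,1]`. -/
def Light (f : ℝ → Set ℝ) : Prop :=
  ∀ y : ℝ, ∀ U : Set ℝ, IsOpen U → (U ∩ Icc (0:ℝ) 1).Nonempty →
    ∃ x ∈ U ∩ Icc (0:ℝ) 1, y ∉ f x

/-- `f` is surjective onto `[0,1]`. -/
def Surj (f : ℝ → Set ℝ) : Prop :=
  ∀ y ∈ Icc (0:ℝ) 1, ∃ x ∈ Icc (0:ℝ) 1, y ∈ f x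

/-- The `n`-fold set-valued composition of `f`. -/
def fIter (f : ℝ → Set ℝ) : ℕ → ℝ → Set ℝ
  | 0, x => {x}
  | n + 1, x => ⋃ z ∈ fIter f n x, f z

/-- The image `f^n[A] = ⋃_{a ∈ A} f^n(a)`. -/
def imIter (f : ℝ → Set ℝ) (n : ℕ) (A : Set ℝ) : Set ℝ :=
  ⋃ a ∈ A, fIter f n a

/-- The inverse limit of the single bonding function `f` on `[0,1]`. -/
def InvLim (f : ℝ → Set ℝ) : Set (ℕ → ℝ) :=
  {z | (∀ i, z i ∈ Icc (0:ℝ) 1) ∧ ∀ i, z i ∈ f (z (i + 1))}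

/-- `X` is irreducible between `x` and `y`: the only subcontinuum of `X`
containing both is `X` itself. -/
def IrreducibleBetween (X : Set (ℕ → ℝ)) (x y : ℕ → ℝ) : Prop :=
  x ∈ X ∧ y ∈ X ∧
    ∀ K ⊆ X, IsCompact K → IsConnected K → x ∈ K → y ∈ K → K = X

/-!
Upper semicontinuity makes `{x : f x ⊆ V}` relatively open for open `V`, which gives the Gδ part
directly. For density, by Baire it suffices to find, in any small open set `O` on which `f` maps
into `D`, a point `x` with `f x ⊆ V` for one open `V ⊇ G`. Take a nonfissile point `(x₁, y₁)` over
`O`; lightness gives a nearby `x₂` with some `y₂ ∈ f x₂` different from `y₁`, and upper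
semicontinuity at `x₁` keeps `y₂` close to `y₁`, so the interval between them lies in `D` and
meets `V` at some `w`. The intermediate value property puts `w` in `f x₃` for some `x₃` between
`x₁` and `x₂`, and a nonfissile point near `(x₃, w)` is the required `x`.
-/

open scoped Interval

theorem IsOpen.subset_closure_inter_iInter {X ι : Type*} [TopologicalSpace X] [BaireSpace X]
    [Countable ι] {O : Set X} (hO : IsOpen O) {W : ι → Set X} (hWo : ∀ i, IsOpen (W i))
    (hW : ∀ i, O ⊆ closure (W i)) : O ⊆ closure (O ∩ ⋂ i, W i) := by
  have hdense : Dense (⋂ i, W i ∪ (closure O)ᶜ) := by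
    refine dense_iInter_of_isOpen (fun i => (hWo i).union isClosed_closure.isOpen_compl)
      fun i => ?_
    rw [dense_iff_closure_eq, eq_univ_iff_forall]
    intro x
    by_cases hx : x ∈ closure O
    · exact closure_mono subset_union_left (closure_minimal (hW i) isClosed_closure hx)
    · exact subset_closure (Or.inr hx)
  refine (hdense.open_subset_closure_inter hO).trans (closure_mono ?_)
  rintro x ⟨hxO, hx⟩
  refine ⟨hxO, mem_iInter.2 fun i => ?_⟩
  exact (mem_iInter.1 hx i).resolve_right (not_not.2 (subset_closure hxO))

theorem AlmostNonfissile.exists_eq_singleton {f : ℝ → Set ℝ} (hanf : AlmostNonfissile f)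
    {x y : ℝ} (hxy : (x, y) ∈ SVGraph f) {O V : Set ℝ} (hO : IsOpen O) (hV : IsOpen V)
    (hx : x ∈ O) (hy : y ∈ V) : ∃ x' ∈ O, ∃ y' ∈ V, x' ∈ Icc (0:ℝ) 1 ∧ f x' = {y'} := by
  obtain ⟨⟨x', y'⟩, ⟨hx', hy'⟩, hxy', hf'⟩ :=
    mem_closure_iff.1 (hanf hxy) (O ×ˢ V) (hO.prod hV) ⟨hx, hy⟩
  exact ⟨x', hx', y', hy', hxy'.1, hf'⟩

namespace USC

variable {f : ℝ → Set ℝ}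

theorem isCompact_svGraph (hf : USC f) : IsCompact (SVGraph f) :=
  (isCompact_Icc.prod isCompact_Icc).of_isClosed_subset hf.2
    fun p hp => ⟨hp.1, (hf.1 p.1 hp.1).2.1 hp.2⟩

theorem exists_isOpen_subset_iff (hf : USC f) {V : Set ℝ} (hV : IsOpen V) :
    ∃ W : Set ℝ, IsOpen W ∧ ∀ x ∈ Icc (0:ℝ) 1, (f x ⊆ V ↔ x ∈ W) := by
  have hK : IsCompact (Prod.fst '' (SVGraph f ∩ univ ×ˢ Vᶜ)) :=
    (hf.isCompact_svGraph.inter_right (isClosed_univ.prod hV.isClosed_compl)).image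
      continuous_fst
  refine ⟨_, hK.isClosed.isOpen_compl, fun x hx => ⟨?_, ?_⟩⟩
  · rintro hxV ⟨⟨x', y⟩, ⟨⟨-, hy⟩, -, hyV⟩, rfl⟩
    exact hyV (hxV hy)
  · intro hxW y hy
    by_contra hyV
    exact hxW ⟨(x, y), ⟨⟨hx, hy⟩, trivial, hyV⟩, rfl⟩

theorem isGδ_setOf_subset (hf : USC f) {G : Set ℝ} (hG : IsGδ G) :
    IsGδ {x : ℝ | x ∈ Icc (0:ℝ) 1 ∧ f x ⊆ G} := by
  obtain ⟨T, hTo, hTc, rfl⟩ := hG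
  have := hTc.to_subtype
  choose W hWo hW using fun V : T => hf.exists_isOpen_subset_iff (hTo V V.2)
  have hEq : {x : ℝ | x ∈ Icc (0:ℝ) 1 ∧ f x ⊆ ⋂₀ T} = Icc (0:ℝ) 1 ∩ ⋂ V : T, W V := by
    ext x
    simp only [mem_ofPred_eq, mem_inter_iff, mem_iInter, subset_sInter_iff, Subtype.forall]
    exact and_congr_right fun hx => forall₂_congr fun V hV => hW ⟨V, hV⟩ x hx
  rw [hEq]
  exact isClosed_Icc.isGδ.inter (.iInter fun V => (hWo V).isGδ)

theorem exists_near_of_eq_singleton (hf : USC f) (hl : Light f) {x₁ y₁ : ℝ}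
    (hx₁ : x₁ ∈ Icc (0:ℝ) 1) (hfx₁ : f x₁ = {y₁}) {O B : Set ℝ} (hO : O ∈ 𝓝 x₁)
    (hB : B ∈ 𝓝 y₁) :
    ∃ x₂ ∈ Icc (0:ℝ) 1, ∃ y₂ ∈ f x₂, x₂ ≠ x₁ ∧ y₂ ≠ y₁ ∧ [[x₁, x₂]] ⊆ O ∧ [[y₁, y₂]] ⊆ B := by
  have ball_ordConnected (c r : ℝ) : (Metric.ball c r).OrdConnected := by
    rw [Real.ball_eq_Ioo]; infer_instance
  obtain ⟨δ, hδ, hδB⟩ := Metric.mem_nhds_iff.1 hB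
  obtain ⟨W, hWo, hW⟩ := hf.exists_isOpen_subset_iff (V := Metric.ball y₁ δ) Metric.isOpen_ball
  have hx₁W : x₁ ∈ W := (hW x₁ hx₁).1 (hfx₁ ▸ singleton_subset_iff.2 (Metric.mem_ball_self hδ))
  obtain ⟨η, hη, hηWO⟩ := Metric.mem_nhds_iff.1 (inter_mem (hWo.mem_nhds hx₁W) hO)
  obtain ⟨x₂, ⟨hx₂η, hx₂⟩, hy₁x₂⟩ :=
    hl y₁ (Metric.ball x₁ η) Metric.isOpen_ball ⟨x₁, Metric.mem_ball_self hη, hx₁⟩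
  obtain ⟨y₂, hy₂⟩ := (hf.1 x₂ hx₂).1
  have hy₂δ : y₂ ∈ Metric.ball y₁ δ := (hW x₂ hx₂).2 (hηWO hx₂η).1 hy₂
  refine ⟨x₂, hx₂, y₂, hy₂, ?_, ?_, ?_, ?_⟩
  · rintro rfl
    exact hy₁x₂ (hfx₁ ▸ rfl)
  · rintro rfl
    exact hy₁x₂ hy₂
  · exact ((ball_ordConnected x₁ η).uIcc_subset (Metric.mem_ball_self hη) hx₂η).trans
      fun x hx => (hηWO hx).2
  · exact ((ball_ordConnected y₁ δ).uIcc_subset (Metric.mem_ball_self hδ) hy₂δ).trans hδB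

theorem exists_subset_of_subset_closure (hf : USC f) (hl : Light f)
    (hanf : AlmostNonfissile f) (hivp : IVP f) {U V : Set ℝ} (hU : IsOpen U) (hV : IsOpen V)
    (hUV : U ∩ Icc (0:ℝ) 1 ⊆ closure V) {O : Set ℝ} (hO : IsOpen O) (hne : O.Nonempty)
    (hOI : O ⊆ Icc (0:ℝ) 1) (hOU : ∀ x ∈ O, f x ⊆ U) : ∃ x ∈ O, f x ⊆ V := by
  obtain ⟨x₀, hx₀⟩ := hne
  obtain ⟨y₀, hy₀⟩ := (hf.1 x₀ (hOI hx₀)).1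
  obtain ⟨x₁, hx₁O, y₁, -, hx₁, hfx₁⟩ :=
    hanf.exists_eq_singleton ⟨hOI hx₀, hy₀⟩ hO isOpen_univ hx₀ trivial
  have hy₁U : y₁ ∈ U := hOU x₁ hx₁O (hfx₁ ▸ rfl)
  obtain ⟨x₂, hx₂, y₂, hy₂, hx₁₂, hy₁₂, hxO, hyU⟩ :=
    hf.exists_near_of_eq_singleton hl hx₁ hfx₁ (hO.mem_nhds hx₁O) (hU.mem_nhds hy₁U)
  have hy₁ : y₁ ∈ Icc (0:ℝ) 1 := (hf.1 x₁ hx₁).2.1 (hfx₁ ▸ rfl)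
  have hy₂I : y₂ ∈ Icc (0:ℝ) 1 := (hf.1 x₂ hx₂).2.1 hy₂
  obtain ⟨m, hm⟩ := nonempty_Ioo.2 (min_lt_max.2 hy₁₂.symm)
  have hmUI : m ∈ U ∩ Icc (0:ℝ) 1 :=
    ⟨hyU (Ioo_subset_Icc_self hm), ordConnected_Icc.uIcc_subset hy₁ hy₂I (Ioo_subset_Icc_self hm)⟩
  obtain ⟨w, hw, hwV⟩ := mem_closure_iff.1 (hUV hmUI) _ isOpen_Ioo hm
  obtain ⟨x₃, hx₃, hwx₃⟩ := hivp x₁ hx₁ x₂ hx₂ hx₁₂.symm y₁ (hfx₁ ▸ rfl) y₂ hy₂ hy₁₂.symm w hw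
  have hIooO : Ioo (min x₁ x₂) (max x₁ x₂) ⊆ O := Ioo_subset_Icc_self.trans hxO
  obtain ⟨x, hx, y, hy, -, hfx⟩ :=
    hanf.exists_eq_singleton ⟨hOI (hIooO hx₃), hwx₃⟩ isOpen_Ioo hV hx₃ hwV
  exact ⟨x, hIooO hx, hfx ▸ singleton_subset_iff.2 hy⟩

theorem subset_closure_setOf_subset (hf : USC f) (hl : Light f)
    (hanf : AlmostNonfissile f) (hivp : IVP f) {U G : Set ℝ} (hU : IsOpen U) (hG : IsGδ G)
    (hUG : U ∩ Icc (0:ℝ) 1 ⊆ closure G) :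
    {x : ℝ | x ∈ Icc (0:ℝ) 1 ∧ f x ⊆ U ∩ Icc (0:ℝ) 1} ⊆
      closure {x : ℝ | x ∈ Icc (0:ℝ) 1 ∧ f x ⊆ G} := by
  obtain ⟨T, hTo, hTc, rfl⟩ := hG
  have := hTc.to_subtype
  choose W hWo hW using fun V : T => hf.exists_isOpen_subset_iff (hTo V V.2)
  obtain ⟨WU, hWUo, hWU⟩ := hf.exists_isOpen_subset_iff hU
  set O := WU ∩ Ioo 0 1
  have hOo : IsOpen O := hWUo.inter isOpen_Ioo
  have hOI : O ⊆ Icc (0:ℝ) 1 := fun x hx => Ioo_subset_Icc_self hx.2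
  have hOW : ∀ V : T, O ⊆ closure (W V) := by
    intro V x hx
    refine mem_closure_iff.2 fun o ho hxo => ?_
    obtain ⟨y, ⟨hyo, hyO⟩, hyV⟩ :=
      hf.exists_subset_of_subset_closure hl hanf hivp hU (hTo V V.2)
        (hUG.trans (closure_mono (sInter_subset_of_mem V.2))) (ho.inter hOo) ⟨x, hxo, hx⟩
        (fun y hy => hOI hy.2) fun y hy => (hWU y (hOI hy.2)).2 hy.2.1
    exact ⟨y, hyo, (hW V y (hOI hyO)).1 hyV⟩
  have hOT : O ∩ ⋂ V : T, W V ⊆ {x : ℝ | x ∈ Icc (0:ℝ) 1 ∧ f x ⊆ ⋂₀ T} :=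
    fun x ⟨hxO, hxW⟩ => ⟨hOI hxO, subset_sInter fun V hV =>
      (hW ⟨V, hV⟩ x (hOI hxO)).2 (mem_iInter.1 hxW ⟨V, hV⟩)⟩
  rintro x₀ ⟨hx₀, hfx₀⟩
  have hx₀O : x₀ ∈ closure O := hWUo.inter_closure
    ⟨(hWU x₀ hx₀).1 (hfx₀.trans inter_subset_left), by rwa [closure_Ioo zero_ne_one]⟩
  exact closure_minimal ((hOo.subset_closure_inter_iInter hWo hOW).trans (closure_mono hOT))
    isClosed_closure hx₀O

end USC

theorem stmt7_general (f : ℝ → Set ℝ) (hf : USC f) (hl : Light f)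
    (hanf : AlmostNonfissile f) (hivp : IVP f)
    (D : Set ℝ) (hD : ∃ U : Set ℝ, IsOpen U ∧ D = U ∩ Icc (0:ℝ) 1)
    (G : Set ℝ) (hG : IsGδ G) :
    IsGδ {x : ℝ | x ∈ Icc (0:ℝ) 1 ∧ f x ⊆ G} ∧
      (D ⊆ closure G →
        {x : ℝ | x ∈ Icc (0:ℝ) 1 ∧ f x ⊆ D} ⊆
          closure {x : ℝ | x ∈ Icc (0:ℝ) 1 ∧ f x ⊆ G}) := by
  obtain ⟨U, hU, rfl⟩ := hD
  exact ⟨hf.isGδ_setOf_subset hG, hf.subset_closure_setOf_subset hl hanf hivp hU hG⟩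

/-- `{x : f(x) ⊆ G}` is Gδ, and dense in `{x : f(x) ⊆ D}` when `G` is dense in `D`. -/
theorem stmt7 (f : ℝ → Set ℝ) (hf : USC f) (hl : Light f)
    (hanf : AlmostNonfissile f) (hivp : IVP f)
    (D : Set ℝ) (hD : ∃ U : Set ℝ, IsOpen U ∧ D = U ∩ Icc (0:ℝ) 1)
    (G : Set ℝ) (hG : IsGδ G) (hGD : G ⊆ D) :
    IsGδ {x : ℝ | x ∈ Icc (0:ℝ) 1 ∧ f x ⊆ G} ∧
      (D ⊆ closure G →
        {x : ℝ | x ∈ Icc (0:ℝ) 1 ∧ f x ⊆ D} ⊆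
          closure {x : ℝ | x ∈ Icc (0:ℝ) 1 ∧ f x ⊆ G}) :=
  stmt7_general f hf hl hanf hivp D hD G hG
end

section
/- Let f : [0,1] → 2^[0,1] be a surjective, almost nonfissile, upper semicontinuous map with the intermediate value property, and let x be an interior point of [0,1] at which f(x) is a nondegenerate interval [a,b] with a < b. Then there exists a sequence L₁, L₂, … of nondegenerate closed subintervals of [0,1] such that every point of each Lₙ is strictly less than x, Lₙ converges to {x} in the Hausdorff metric, and f[Lₙ] converges to f(x) in the Hausdorff metric. -/
open Set Filter Topology

/-!
By upper semicontinuity, `f[L]` lies in the `ε`-neighbourhood of `f(x)` for every interval `L`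
close enough to `x`. Conversely, by the intermediate value property the values `a` and `b`
are approximated by values `f(t_a) ∋ y_a`, `f(t_b) ∋ y_b` at points `t_a < t_b` arbitrarily
close to `x` on the left, and applying the intermediate value property once more between
`t_a` and `t_b` shows that `f[[t_a, t_b]]` contains every value between `y_a` and `y_b`, so it
is `ε`-dense in `f(x) ⊆ [a, b]`.
-/

open Set Filter Topology Metric

variable {f : ℝ → Set ℝ}

/-- The graph is compact, so its part at distance `≥ ε` from `{x} × f x` projects to a
closed set not containing `x`. -/
lemma USC.eventually_infDist_lt (hf : USC f) (x : ℝ) {ε : ℝ} (hε : 0 < ε) :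
    ∀ᶠ t in 𝓝 x, t ∈ Icc (0:ℝ) 1 → ∀ s ∈ f t, infDist s (f x) < ε := by
  set K := SVGraph f ∩ {p | ε ≤ infDist p.2 (f x)}
  have hgraph : IsCompact (SVGraph f) :=
    (isCompact_Icc.prod isCompact_Icc).of_isClosed_subset hf.2
      fun p hp => ⟨hp.1, (hf.1 p.1 hp.1).2.1 hp.2⟩
  have hK : IsCompact K :=
    hgraph.inter_right <|
      isClosed_le continuous_const ((continuous_infDist_pt _).comp continuous_snd)
  have hx : x ∉ Prod.fst '' K := by
    rintro ⟨⟨_, s⟩, ⟨⟨_, hs⟩, hfar⟩, rfl⟩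
    rw [mem_ofPred_eq, infDist_zero_of_mem hs] at hfar
    exact hfar.not_gt hε
  filter_upwards [(hK.image continuous_fst).isClosed.isOpen_compl.mem_nhds hx]
    with t ht ht01 s hs
  exact not_le.1 fun hfar => ht ⟨(t, s), ⟨⟨ht01, hs⟩, hfar⟩, rfl⟩

lemma IVP.exists_mem_Ico_dist_lt (hivp : IVP f) {t₀ x : ℝ} (ht₀ : t₀ ∈ Icc (0:ℝ) 1)
    (hx : x ∈ Icc (0:ℝ) 1) (ht₀x : t₀ < x) (hne : (f t₀).Nonempty) {y₀ : ℝ}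
    (hy₀ : y₀ ∈ f x) {ε : ℝ} (hε : 0 < ε) : ∃ t ∈ Ico t₀ x, ∃ y ∈ f t, dist y y₀ < ε := by
  obtain ⟨w, hw⟩ := hne
  rcases eq_or_ne w y₀ with rfl | hwy
  · exact ⟨t₀, ⟨le_rfl, ht₀x⟩, w, hw, by simpa using hε⟩
  have hy₀cl : y₀ ∈ closure (Ioo (min w y₀) (max w y₀)) := by
    rw [closure_Ioo (min_lt_max.2 hwy).ne]
    exact ⟨min_le_right _ _, le_max_right _ _⟩
  obtain ⟨y, hy, hyy₀⟩ := Metric.mem_closure_iff.1 hy₀cl ε hε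
  obtain ⟨t, ht, hyt⟩ := hivp t₀ ht₀ x hx ht₀x.ne w hw y₀ hy₀ hwy y hy
  rw [min_eq_left ht₀x.le, max_eq_right ht₀x.le] at ht
  exact ⟨t, Ioo_subset_Ico_self ht, y, hyt, by rwa [dist_comm]⟩

lemma IVP.infDist_biUnion_Icc_lt (hivp : IVP f) {l r : ℝ} (hl : l ∈ Icc (0:ℝ) 1)
    (hr : r ∈ Icc (0:ℝ) 1) (hlr : l < r) {a b ya yb ε : ℝ} (hya : ya ∈ f l)
    (hyb : yb ∈ f r) (ha : dist ya a < ε) (hb : dist yb b < ε) {y : ℝ} (hy : y ∈ Icc a b) :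
    infDist y (⋃ t ∈ Icc l r, f t) < ε := by
  have hε : 0 < ε := dist_nonneg.trans_lt ha
  rw [Real.dist_eq, abs_lt] at ha hb
  rcases le_or_gt y ya with hyya | hyya
  · calc infDist y _ ≤ dist y ya :=
          infDist_le_dist_of_mem (mem_biUnion (left_mem_Icc.2 hlr.le) hya)
      _ < ε := by rw [Real.dist_eq, abs_lt]; constructor <;> linarith [hy.1]
  rcases le_or_gt yb y with hyby | hyby
  · calc infDist y _ ≤ dist y yb :=
          infDist_le_dist_of_mem (mem_biUnion (right_mem_Icc.2 hlr.le) hyb)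
      _ < ε := by rw [Real.dist_eq, abs_lt]; constructor <;> linarith [hy.2]
  have hyab : y ∈ Ioo (min ya yb) (max ya yb) := by
    rw [min_eq_left (hyya.trans hyby).le, max_eq_right (hyya.trans hyby).le]
    exact ⟨hyya, hyby⟩
  obtain ⟨u, hu, hyu⟩ := hivp l hl r hr hlr.ne ya hya yb hyb (hyya.trans hyby).ne y hyab
  rw [min_eq_left hlr.le, max_eq_right hlr.le] at hu
  rw [infDist_zero_of_mem (mem_biUnion (Ioo_subset_Icc_self hu) hyu)]
  exact hε

lemma exists_Icc_left_hausdorffDist_le (hf : USC f) (hivp : IVP f) {x : ℝ}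
    (hx : x ∈ Ioo (0:ℝ) 1) {a b : ℝ} (ha : a ∈ f x) (hb : b ∈ f x) (hsub : f x ⊆ Icc a b)
    {ε : ℝ} (hε : 0 < ε) :
    ∃ l r, l < r ∧ 0 ≤ l ∧ x - ε < l ∧ r < x ∧
      hausdorffDist (⋃ t ∈ Icc l r, f t) (f x) ≤ ε := by
  have hx01 : x ∈ Icc (0:ℝ) 1 := Ioo_subset_Icc_self hx
  have hev : ∀ᶠ t in 𝓝[<] x,
      0 < t ∧ x - ε < t ∧ ∀ s ∈ f t, infDist s (f x) < ε := by
    filter_upwards [nhdsWithin_le_nhds (lt_mem_nhds hx.1),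
      nhdsWithin_le_nhds (lt_mem_nhds (sub_lt_self x hε)),
      nhdsWithin_le_nhds (hf.eventually_infDist_lt x hε), self_mem_nhdsWithin]
      with t ht0 htε hclose htx
    exact ⟨ht0, htε, hclose ⟨ht0.le, htx.out.le.trans hx01.2⟩⟩
  obtain ⟨t₀, ht₀x, hgood⟩ := mem_nhdsLT_iff_exists_Ico_subset.1 hev
  have hIco01 {t : ℝ} (ht : t ∈ Ico t₀ x) : t ∈ Icc (0:ℝ) 1 :=
    ⟨(hgood ht).1.le, ht.2.le.trans hx01.2⟩
  have ht₀ : t₀ ∈ Ico t₀ x := ⟨le_rfl, ht₀x⟩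
  obtain ⟨ta, hta, ya, hya, hyaa⟩ :=
    hivp.exists_mem_Ico_dist_lt (hIco01 ht₀) hx01 ht₀x ((hf.1 _ (hIco01 ht₀)).1) ha hε
  have hmid : (ta + x) / 2 ∈ Ico t₀ x := ⟨by linarith [hta.1, hta.2], by linarith [hta.2]⟩
  obtain ⟨tb, htb, yb, hyb, hybb⟩ :=
    hivp.exists_mem_Ico_dist_lt (hIco01 hmid) hx01 hmid.2 ((hf.1 _ (hIco01 hmid)).1) hb hε
  have htab : ta < tb := by linarith [hta.2, htb.1]
  have hL : Icc ta tb ⊆ Ico t₀ x := Icc_subset_Ico hta.1 htb.2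
  refine ⟨ta, tb, htab, (hIco01 hta).1, (hgood hta).2.1, htb.2,
    hausdorffDist_le_of_infDist hε.le ?_ ?_⟩
  · simp only [mem_iUnion, exists_prop]
    rintro s ⟨t, ht, hs⟩
    exact ((hgood (hL ht)).2.2 s hs).le
  · exact fun y hy => (hivp.infDist_biUnion_Icc_lt (hIco01 hta)
      (hIco01 (hL ⟨htab.le, le_rfl⟩)) htab hya hyb hyaa hybb (hsub hy)).le

theorem stmt8_general (f : ℝ → Set ℝ) (hf : USC f) (hivp : IVP f)
    (x : ℝ) (hx : x ∈ Ioo (0:ℝ) 1) (a b : ℝ)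
    (hfx : f x = Icc a b) :
    ∃ l r : ℕ → ℝ,
      (∀ k, l k < r k) ∧
      (∀ k, Icc (l k) (r k) ⊆ Icc (0:ℝ) 1) ∧
      (∀ k, r k < x) ∧
      Tendsto l atTop (𝓝 x) ∧ Tendsto r atTop (𝓝 x) ∧
      Tendsto (fun k => Metric.hausdorffDist (⋃ t ∈ Icc (l k) (r k), f t) (f x))
        atTop (𝓝 0) := by
  have hab : a ≤ b := nonempty_Icc.1 (hfx ▸ (hf.1 x (Ioo_subset_Icc_self hx)).1)
  have ha : a ∈ f x := hfx ▸ left_mem_Icc.2 hab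
  have hb : b ∈ f x := hfx ▸ right_mem_Icc.2 hab
  choose l r hlr hl0 hlx hrx hdist using fun k : ℕ =>
    exists_Icc_left_hausdorffDist_le hf hivp hx ha hb hfx.subset
      (Nat.one_div_pos_of_nat (n := k))
  have hlow : Tendsto (fun k : ℕ => x - 1 / (k + 1 : ℝ)) atTop (𝓝 x) := by
    simpa using (tendsto_const_nhds (x := x)).sub tendsto_one_div_add_atTop_nhds_zero_nat
  refine ⟨l, r, hlr, fun k => Icc_subset_Icc (hl0 k) ((hrx k).le.trans hx.2.le), hrx, ?_, ?_, ?_⟩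
  · exact tendsto_of_tendsto_of_tendsto_of_le_of_le hlow tendsto_const_nhds
      (fun k => (hlx k).le) (fun k => ((hlr k).trans (hrx k)).le)
  · exact tendsto_of_tendsto_of_tendsto_of_le_of_le hlow tendsto_const_nhds
      (fun k => ((hlx k).trans (hlr k)).le) (fun k => (hrx k).le)
  · exact squeeze_zero (fun k => hausdorffDist_nonneg) hdist
      tendsto_one_div_add_atTop_nhds_zero_nat

/-- a sequence of nondegenerate closed intervals to the left of `x`
converging to `{x}`, whose images converge to `f(x)` in the Hausdorff metric. -/
theorem stmt8 (f : ℝ → Set ℝ) (hf : USC f) (hsurj : Surj f)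
    (hanf : AlmostNonfissile f) (hivp : IVP f)
    (x : ℝ) (hx : x ∈ Ioo (0:ℝ) 1) (a b : ℝ) (hab : a < b)
    (hfx : f x = Icc a b) :
    ∃ l r : ℕ → ℝ,
      (∀ k, l k < r k) ∧
      (∀ k, Icc (l k) (r k) ⊆ Icc (0:ℝ) 1) ∧
      (∀ k, r k < x) ∧
      Tendsto l atTop (𝓝 x) ∧ Tendsto r atTop (𝓝 x) ∧
      Tendsto (fun k => Metric.hausdorffDist (⋃ t ∈ Icc (l k) (r k), f t) (f x))
        atTop (𝓝 0) :=
  stmt8_general f hf hivp x hx a b hfx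
end

section
/- Let f : [0,1] → 2^[0,1] be upper semicontinuous, surjective, with the intermediate value property, and suppose the inverse limit X = lim←{[0,1], f} is irreducible between points x = (x₀,x₁,…) and y = (y₀,y₁,…). For each k ≥ 0 define J_k = cl(∪_{n≥k} f^{n−k}[I_n]), where I_n is the closed interval with endpoints x_n and y_n. Then each J_k is a closed subinterval of [0,1] and f[J_{k+1}] = J_k. -/
open Set Filter Topology

/-!
Since `x` and `y` lie in the inverse limit, `I_n ⊆ f[I_{n+1}]`. Hence the sets `f^m[I_{m+k}]`
increase with `m` and all contain `I_k`, so their union `A_k` satisfies `f[A_{k+1}] = A_k`, and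
it is an interval as soon as `f` maps intervals to intervals. The latter, and the identity
`f[cl A] = cl f[A]` for intervals `A`, come from the intermediate value property (together with
surjectivity, to see that the values `f x` are intervals). Then `J_k = cl A_k`.
-/

variable {f : ℝ → Set ℝ}

def svImage (f : ℝ → Set ℝ) (C : Set ℝ) : Set ℝ := ⋃ t ∈ C, f t

theorem mem_svImage {C : Set ℝ} {s : ℝ} : s ∈ svImage f C ↔ ∃ t ∈ C, s ∈ f t := by
  simp [svImage]

theorem svImage_mono {C D : Set ℝ} (h : C ⊆ D) : svImage f C ⊆ svImage f D :=
  biUnion_subset_biUnion_left h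

theorem svImage_iUnion {ι : Sort*} (S : ι → Set ℝ) :
    svImage f (⋃ i, S i) = ⋃ i, svImage f (S i) :=
  biUnion_iUnion S f

theorem imIter_zero (A : Set ℝ) : imIter f 0 A = A := by
  simp [imIter, fIter]

theorem imIter_succ (n : ℕ) (A : Set ℝ) : imIter f (n + 1) A = svImage f (imIter f n A) := by
  ext s
  simp only [imIter, fIter, svImage, mem_iUnion, exists_prop]
  tauto

theorem isCompact_SVGraph (hf : USC f) : IsCompact (SVGraph f) :=
  (isCompact_Icc.prod isCompact_Icc).of_isClosed_subset hf.2
    fun p hp => ⟨hp.1, (hf.1 p.1 hp.1).2.1 hp.2⟩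

theorem isCompact_svImage (hf : USC f) {K : Set ℝ} (hK : IsClosed K)
    (hK₁ : K ⊆ Icc (0:ℝ) 1) : IsCompact (svImage f K) := by
  have heq : svImage f K = Prod.snd '' (SVGraph f ∩ K ×ˢ univ) := by
    ext s
    constructor
    · intro hs
      obtain ⟨t, ht, hst⟩ := mem_svImage.1 hs
      exact ⟨(t, s), ⟨⟨hK₁ ht, hst⟩, ht, trivial⟩, rfl⟩
    · rintro ⟨⟨t, s⟩, ⟨⟨-, hst⟩, ht, -⟩, rfl⟩
      exact mem_svImage.2 ⟨t, ht, hst⟩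
  rw [heq]
  exact ((isCompact_SVGraph hf).inter_right (hK.prod isClosed_univ)).image continuous_snd

theorem isClosed_setOf_inter_nonempty (hf : USC f) {W : Set ℝ} (hW : IsClosed W) :
    IsClosed {t ∈ Icc (0:ℝ) 1 | (f t ∩ W).Nonempty} := by
  have heq : {t ∈ Icc (0:ℝ) 1 | (f t ∩ W).Nonempty} = Prod.fst '' (SVGraph f ∩ univ ×ˢ W) := by
    ext t
    constructor
    · rintro ⟨ht, s, hst, hsW⟩
      exact ⟨(t, s), ⟨⟨ht, hst⟩, trivial, hsW⟩, rfl⟩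
    · rintro ⟨⟨t, s⟩, ⟨⟨ht, hst⟩, -, hsW⟩, rfl⟩
      exact ⟨ht, s, hst, hsW⟩
  rw [heq]
  exact (((isCompact_SVGraph hf).inter_right (isClosed_univ.prod hW)).image
    continuous_fst).isClosed

theorem IsClosed.exists_mem_forall_Ioo_notMem {K : Set ℝ} (hK : IsClosed K) (hne : K.Nonempty)
    (x : ℝ) : ∃ t ∈ K, ∀ u ∈ Ioo (min x t) (max x t), u ∉ K := by
  obtain ⟨t, ht, hdist⟩ := hK.exists_infDist_eq_dist hne x
  refine ⟨t, ht, fun u hu huK => ?_⟩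
  have hle : dist x t ≤ dist x u := hdist ▸ Metric.infDist_le_dist_of_mem huK
  rw [Real.dist_eq, Real.dist_eq] at hle
  rcases le_total x t with h | h
  · rw [min_eq_left h, max_eq_right h] at hu
    rw [abs_of_nonpos (by linarith), abs_of_nonpos (by linarith [hu.1])] at hle
    linarith [hu.2]
  · rw [min_eq_right h, max_eq_left h] at hu
    rw [abs_of_nonneg (by linarith), abs_of_nonneg (by linarith [hu.2])] at hle
    linarith [hu.1]

theorem ordConnected_apply (hf : USC f) (hsurj : Surj f) (hivp : IVP f) {x : ℝ}
    (hx : x ∈ Icc (0:ℝ) 1) : (f x).OrdConnected := by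
  refine ⟨fun c hc d hd y hy => ?_⟩
  by_contra hyx
  obtain ⟨-, hfx₁, hfx_compact⟩ := hf.1 x hx
  obtain ⟨δ, hδ, hW⟩ : ∃ δ > 0, Metric.closedBall y δ ⊆ (f x)ᶜ ∩ Ioi c :=
    Metric.nhds_basis_closedBall.mem_iff.1 <| inter_mem
      (hfx_compact.isClosed.isOpen_compl.mem_nhds hyx)
      (Ioi_mem_nhds (hy.1.lt_of_ne (by rintro rfl; exact hyx hc)))
  obtain ⟨x', hx', hyx'⟩ := hsurj y (ordConnected_Icc.out (hfx₁ hc) (hfx₁ hd) hy)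
  -- Take `t` nearest to `x` with `f t` meeting the window around `y`; the IVP between `x` and `t`
  -- reaches the window strictly between them, contradicting the choice of `t`.
  obtain ⟨t, ⟨ht, s, hst, hsW⟩, hnear⟩ :=
    (isClosed_setOf_inter_nonempty hf Metric.isClosed_closedBall).exists_mem_forall_Ioo_notMem
      ⟨x', hx', y, hyx', Metric.mem_closedBall_self hδ.le⟩ x
  have hxt : x ≠ t := by
    rintro rfl
    exact (hW hsW).1 hst
  obtain ⟨y₁, hy₁, w, hwW, hw⟩ : ∃ y₁ ∈ f x, ∃ w ∈ Metric.closedBall y δ,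
      w ∈ Ioo (min y₁ s) (max y₁ s) := by
    rcases lt_or_ge s y with hsy | hys
    · have hyd : y < d := hy.2.lt_of_ne (by rintro rfl; exact hyx hd)
      exact ⟨d, hd, y, Metric.mem_closedBall_self hδ.le,
        min_lt_of_right_lt hsy, lt_max_of_lt_left hyd⟩
    · have hwW : y - δ / 2 ∈ Metric.closedBall y δ := by
        rw [Metric.mem_closedBall, Real.dist_eq, abs_le]
        constructor <;> linarith
      exact ⟨c, hc, y - δ / 2, hwW, min_lt_of_left_lt (hW hwW).2,
        lt_max_of_lt_right (by linarith)⟩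
  obtain ⟨x₃, hx₃, hwx₃⟩ :=
    hivp x hx t ht hxt y₁ hy₁ s hst (fun h => (hW (h ▸ hsW)).1 hy₁) w hw
  exact hnear x₃ hx₃ ⟨ordConnected_Icc.uIcc_subset hx ht (Ioo_subset_Icc_self hx₃), w, hwx₃, hwW⟩

theorem ordConnected_svImage (hf : USC f) (hsurj : Surj f) (hivp : IVP f) {C : Set ℝ}
    (hC : C ⊆ Icc (0:ℝ) 1) (hCo : C.OrdConnected) : (svImage f C).OrdConnected := by
  refine ⟨fun u hu v hv w hw => ?_⟩
  obtain ⟨x₁, hx₁, hu⟩ := mem_svImage.1 hu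
  obtain ⟨x₂, hx₂, hv⟩ := mem_svImage.1 hv
  rcases eq_or_ne x₁ x₂ with rfl | hne
  · exact mem_svImage.2 ⟨x₁, hx₁, (ordConnected_apply hf hsurj hivp (hC hx₁)).out hu hv hw⟩
  rcases hw.1.eq_or_lt with rfl | huw
  · exact mem_svImage.2 ⟨x₁, hx₁, hu⟩
  rcases hw.2.eq_or_lt with rfl | hwv
  · exact mem_svImage.2 ⟨x₂, hx₂, hv⟩
  obtain ⟨x₃, hx₃, hwx₃⟩ := hivp x₁ (hC hx₁) x₂ (hC hx₂) hne u hu v hv (huw.trans hwv).ne w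
    ⟨min_lt_of_left_lt huw, lt_max_of_lt_right hwv⟩
  exact mem_svImage.2 ⟨x₃, hCo.uIcc_subset hx₁ hx₂ (Ioo_subset_Icc_self hx₃), hwx₃⟩

theorem IsConnected.Ioo_subset_of_mem_closure {α : Type*} [ConditionallyCompleteLinearOrder α]
    [TopologicalSpace α] [OrderTopology α] {S : Set α} (hS : IsConnected S) (hb : BddBelow S)
    (ha : BddAbove S) {u v : α} (hu : u ∈ closure S) (hv : v ∈ closure S) :
    Ioo (min u v) (max u v) ⊆ S := by
  have hcl : closure S ⊆ Icc (sInf S) (sSup S) :=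
    closure_minimal (subset_Icc_csInf_csSup hb ha) isClosed_Icc
  exact (Ioo_subset_Ioo (le_min (hcl hu).1 (hcl hv).1) (max_le (hcl hu).2 (hcl hv).2)).trans
    (hS.Ioo_csInf_csSup_subset hb ha)

def IsSubinterval (S : Set ℝ) : Prop :=
  S ⊆ Icc (0:ℝ) 1 ∧ S.Nonempty ∧ S.OrdConnected

theorem IsSubinterval.isConnected {S : Set ℝ} (hS : IsSubinterval S) : IsConnected S :=
  ⟨hS.2.1, hS.2.2.isPreconnected⟩

theorem IsSubinterval.closure_eq_Icc {S : Set ℝ} (hS : IsSubinterval S) :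
    ∃ a b : ℝ, a ≤ b ∧ Icc a b ⊆ Icc (0:ℝ) 1 ∧ closure S = Icc a b := by
  have hcl : closure S ⊆ Icc (0:ℝ) 1 := closure_minimal hS.1 isClosed_Icc
  have heq := eq_Icc_of_connected_compact hS.isConnected.closure
    (isCompact_Icc.of_isClosed_subset isClosed_closure hcl)
  exact ⟨_, _, nonempty_Icc.1 (heq ▸ hS.2.1.closure), heq ▸ hcl, heq⟩

theorem isSubinterval_svImage (hf : USC f) (hsurj : Surj f) (hivp : IVP f) {S : Set ℝ}
    (hS : IsSubinterval S) : IsSubinterval (svImage f S) := by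
  refine ⟨fun s hs => ?_, ?_, ordConnected_svImage hf hsurj hivp hS.1 hS.2.2⟩
  · obtain ⟨t, ht, hst⟩ := mem_svImage.1 hs
    exact (hf.1 t (hS.1 ht)).2.1 hst
  · obtain ⟨t, ht⟩ := hS.2.1
    obtain ⟨s, hst⟩ := (hf.1 t (hS.1 ht)).1
    exact ⟨s, mem_svImage.2 ⟨t, ht, hst⟩⟩

theorem isSubinterval_imIter (hf : USC f) (hsurj : Surj f) (hivp : IVP f) {S : Set ℝ}
    (hS : IsSubinterval S) (n : ℕ) : IsSubinterval (imIter f n S) := by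
  induction n with
  | zero => rwa [imIter_zero]
  | succ n ih => rw [imIter_succ]; exact isSubinterval_svImage hf hsurj hivp ih

theorem svImage_closure (hf : USC f) (hivp : IVP f) {S : Set ℝ}
    (hS : IsSubinterval S) : svImage f (closure S) = closure (svImage f S) := by
  have hcl : closure S ⊆ Icc (0:ℝ) 1 := closure_minimal hS.1 isClosed_Icc
  refine Subset.antisymm (fun s hs => ?_) (closure_minimal (svImage_mono subset_closure)
    (isCompact_svImage hf isClosed_closure hcl).isClosed)
  obtain ⟨t, ht, hst⟩ := mem_svImage.1 hs
  obtain ⟨t', ht'⟩ := hS.2.1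
  obtain ⟨s', hst'⟩ := (hf.1 t' (hS.1 ht')).1
  rcases eq_or_ne t' t with rfl | htt
  · exact subset_closure (mem_svImage.2 ⟨t', ht', hst⟩)
  rcases eq_or_ne s' s with rfl | hss
  · exact subset_closure (mem_svImage.2 ⟨t', ht', hst'⟩)
  have hIoo : Ioo (min s' s) (max s' s) ⊆ svImage f S := fun w hw => by
    obtain ⟨x₃, hx₃, hwx₃⟩ := hivp t' (hS.1 ht') t (hcl ht) htt s' hst' s hst hss w hw
    exact mem_svImage.2 ⟨x₃, hS.isConnected.Ioo_subset_of_mem_closure (bddBelow_Icc.mono hS.1)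
      (bddAbove_Icc.mono hS.1) (subset_closure ht') ht hx₃, hwx₃⟩
  refine closure_mono hIoo ?_
  rw [closure_Ioo (min_lt_max.2 hss).ne]
  exact ⟨min_le_right _ _, le_max_right _ _⟩

def tailUnion (f : ℝ → Set ℝ) (I : ℕ → Set ℝ) (k : ℕ) : Set ℝ :=
  ⋃ m, imIter f m (I (m + k))

section tailUnion

variable {I : ℕ → Set ℝ}

theorem imIter_succ_add (m k : ℕ) :
    imIter f (m + 1) (I (m + 1 + k)) = svImage f (imIter f m (I (m + (k + 1)))) := by
  rw [imIter_succ, Nat.add_right_comm, Nat.add_assoc]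

theorem imIter_subset_imIter_succ (hI : ∀ n, I n ⊆ svImage f (I (n + 1))) (m k : ℕ) :
    imIter f m (I (m + k)) ⊆ imIter f (m + 1) (I (m + 1 + k)) := by
  induction m generalizing k with
  | zero => simpa [imIter_succ_add, imIter_zero] using hI k
  | succ m ih =>
      rw [imIter_succ_add, imIter_succ_add]
      exact svImage_mono (ih (k + 1))

theorem monotone_imIter_tail (hI : ∀ n, I n ⊆ svImage f (I (n + 1))) (k : ℕ) :
    Monotone fun m => imIter f m (I (m + k)) :=
  monotone_nat_of_le_succ fun m => imIter_subset_imIter_succ hI m k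

theorem svImage_tailUnion (hI : ∀ n, I n ⊆ svImage f (I (n + 1))) (k : ℕ) :
    svImage f (tailUnion f I (k + 1)) = tailUnion f I k := by
  simp only [tailUnion, svImage_iUnion, ← imIter_succ_add]
  exact (monotone_imIter_tail hI k).iUnion_nat_add 1

theorem isSubinterval_tailUnion (hf : USC f) (hsurj : Surj f) (hivp : IVP f)
    (hI : ∀ n, I n ⊆ svImage f (I (n + 1))) (hsub : ∀ n, IsSubinterval (I n)) (k : ℕ) :
    IsSubinterval (tailUnion f I k) := by
  have hsub' m := isSubinterval_imIter hf hsurj hivp (hsub (m + k)) m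
  obtain ⟨p, hp⟩ := (hsub k).2.1
  have hp' : ∀ m, p ∈ imIter f m (I (m + k)) := fun m =>
    monotone_imIter_tail hI k (Nat.zero_le m) (by simpa [imIter_zero] using hp)
  refine ⟨iUnion_subset fun m => (hsub' m).1, ⟨p, mem_iUnion.2 ⟨0, hp' 0⟩⟩, ?_⟩
  exact isPreconnected_iff_ordConnected.1 <|
    isPreconnected_iUnion ⟨p, mem_iInter.2 hp'⟩ fun m => (hsub' m).2.2.isPreconnected

end tailUnion

theorem uIcc_subset_svImage (hf : USC f) (hsurj : Surj f) (hivp : IVP f) {x y : ℕ → ℝ}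
    (hx : x ∈ InvLim f) (hy : y ∈ InvLim f) (n : ℕ) :
    uIcc (x n) (y n) ⊆ svImage f (uIcc (x (n + 1)) (y (n + 1))) :=
  (ordConnected_svImage hf hsurj hivp (ordConnected_Icc.uIcc_subset (hx.1 _) (hy.1 _))
    ordConnected_uIcc).uIcc_subset (mem_svImage.2 ⟨_, left_mem_uIcc, hx.2 n⟩)
    (mem_svImage.2 ⟨_, right_mem_uIcc, hy.2 n⟩)

/-- each `J_k = cl(⋃_{n ≥ k} f^{n-k}[I_n])` is a closed subinterval
of `[0,1]` and `f[J_{k+1}] = J_k`. -/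
theorem stmt13 (f : ℝ → Set ℝ) (hf : USC f) (hsurj : Surj f) (hivp : IVP f)
    (x y : ℕ → ℝ) (hirr : IrreducibleBetween (InvLim f) x y) :
    ∀ k : ℕ,
      (∃ a b : ℝ, a ≤ b ∧ Icc a b ⊆ Icc (0:ℝ) 1 ∧
        closure (⋃ m : ℕ, imIter f m (uIcc (x (m + k)) (y (m + k)))) = Icc a b) ∧
      (⋃ t ∈ closure (⋃ m : ℕ, imIter f m (uIcc (x (m + (k+1))) (y (m + (k+1))))), f t) =
        closure (⋃ m : ℕ, imIter f m (uIcc (x (m + k)) (y (m + k)))) := by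
  obtain ⟨hx, hy, -⟩ := hirr
  set I : ℕ → Set ℝ := fun n => uIcc (x n) (y n)
  have hsub (n : ℕ) : IsSubinterval (I n) :=
    ⟨ordConnected_Icc.uIcc_subset (hx.1 n) (hy.1 n), nonempty_uIcc, ordConnected_uIcc⟩
  have hI := uIcc_subset_svImage hf hsurj hivp hx hy
  have hA := isSubinterval_tailUnion hf hsurj hivp hI hsub
  intro k
  refine ⟨(hA k).closure_eq_Icc, ?_⟩
  change svImage f (closure (tailUnion f I (k + 1))) = closure (tailUnion f I k)
  rw [svImage_closure hf hivp (hA (k + 1)), svImage_tailUnion hI]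
end

section
/- Suppose for each n ∈ ℕ, f_n : [0,1] → 2^[0,1] is a surjective, light, almost nonfissile, upper semicontinuous set-valued map with the intermediate value property. Then the inverse limit X = lim←{[0,1], f_n} has the full-projection property: every subcontinuum K of X with π_i[K] = [0,1] for infinitely many i equals X. -/
open Set Filter Topology

/-!
Almost nonfissility and surjectivity of `f (i+1)` push a full projection of a compact `K ⊆ X`
from coordinate `i+1` down to coordinate `i`, so `K` projects onto `[0,1]` in every coordinate.
Such a `K` is dense in `X`: for `w ∈ X`, `n` and `ε`, induction on `n` gives a nonempty open
`V ⊆ [0,1]` such that every `z ∈ X` with `z n ∈ V` is `ε`-close to `w` in the coordinates `≤ n`.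
In the inductive step lightness gives `x` near `w (n+1)` with `w n ∉ f (n+1) x`, the IVP between
`w (n+1)` and `x` hits the open set `V` of the previous level, and upper semicontinuity at a
nearby nonfissile point keeps all values of `f (n+1)` inside `V` on an open set of arguments.
-/

open Metric

def invLimSeq (f : ℕ → ℝ → Set ℝ) : Set (ℕ → ℝ) :=
  {z | (∀ i, z i ∈ Icc (0:ℝ) 1) ∧ ∀ i, z i ∈ f (i + 1) (z (i + 1))}

lemma nonempty_uIoo_inter_ball {a t ε : ℝ} (hat : a ≠ t) (hε : 0 < ε) :
    (uIoo a t ∩ ball a ε).Nonempty := by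
  rw [inter_comm]
  exact mem_closure_iff.1 (closure_uIoo hat ▸ left_mem_uIcc) _ isOpen_ball (mem_ball_self hε)

section SetValued

variable {g : ℝ → Set ℝ}

lemma USC.exists_isOpen_forall_subset (hg : USC g) {x₀ y₀ : ℝ} (hx₀ : x₀ ∈ Icc (0:ℝ) 1)
    (hsing : g x₀ = {y₀}) {V : Set ℝ} (hV : IsOpen V) (hy₀ : y₀ ∈ V) :
    ∃ O, IsOpen O ∧ x₀ ∈ O ∧ ∀ x ∈ O ∩ Icc (0:ℝ) 1, g x ⊆ V := by
  set C := SVGraph g ∩ Prod.snd ⁻¹' Vᶜ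
  have hC : IsCompact C :=
    (isCompact_Icc.prod isCompact_Icc).of_isClosed_subset
      (hg.2.inter (hV.isClosed_compl.preimage continuous_snd))
      fun p hp => ⟨hp.1.1, (hg.1 _ hp.1.1).2.1 hp.1.2⟩
  refine ⟨(Prod.fst '' C)ᶜ, (hC.image continuous_fst).isClosed.isOpen_compl, ?_, ?_⟩
  · rintro ⟨⟨x, y⟩, ⟨⟨-, hy⟩, hyV⟩, rfl⟩
    rw [hsing, mem_singleton_iff] at hy
    exact hyV (hy ▸ hy₀)
  · intro x hx y hy
    by_contra hyV
    exact hx.1 ⟨(x, y), ⟨⟨hx.2, hy⟩, hyV⟩, rfl⟩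

lemma exists_isOpen_subset_uIoo_forall_subset (hg : USC g) (hanf : AlmostNonfissile g)
    (hivp : IVP g) {x₁ x₂ : ℝ} (hx₁ : x₁ ∈ Icc (0:ℝ) 1) (hx₂ : x₂ ∈ Icc (0:ℝ) 1)
    (hx : x₁ ≠ x₂) {y₁ y₂ : ℝ} (hy₁ : y₁ ∈ g x₁) (hy₂ : y₂ ∈ g x₂) {V : Set ℝ}
    (hV : IsOpen V) (hVne : V.Nonempty) (hVy : V ⊆ uIoo y₁ y₂) :
    ∃ O, IsOpen O ∧ O.Nonempty ∧ O ⊆ uIoo x₁ x₂ ∧ ∀ x ∈ O, g x ⊆ V := by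
  obtain ⟨u, hu⟩ := hVne
  have hy : y₁ ≠ y₂ := by
    rintro rfl
    simpa [uIoo_self] using hVy hu
  have hIcc : uIoo x₁ x₂ ⊆ Icc 0 1 := uIoo_subset_uIcc_self.trans (uIcc_subset_Icc hx₁ hx₂)
  obtain ⟨x₃, hx₃, hux₃⟩ := hivp x₁ hx₁ x₂ hx₂ hx y₁ hy₁ y₂ hy₂ hy u (hVy hu)
  have hgraph : (x₃, u) ∈ SVGraph g := ⟨hIcc hx₃, hux₃⟩
  obtain ⟨q, hq, ⟨hq₁, -⟩, hqsing⟩ :=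
    mem_closure_iff.1 (hanf hgraph) _ (isOpen_Ioo.prod hV) ⟨hx₃, hu⟩
  obtain ⟨O, hO, hqO, hOV⟩ := hg.exists_isOpen_forall_subset hq₁ hqsing hV hq.2
  exact ⟨O ∩ uIoo x₁ x₂, hO.inter isOpen_Ioo, ⟨q.1, hqO, hq.1⟩, inter_subset_right,
    fun x hx => hOV x ⟨hx.1, hIcc hx.2⟩⟩

lemma Light.exists_notMem_uIoo_subset (hl : Light g) {a t : ℝ} (ha : a ∈ Icc (0:ℝ) 1)
    (ht : t ∈ Icc (0:ℝ) 1) (hat : a ≠ t) {ε : ℝ} (hε : 0 < ε) (y : ℝ) :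
    ∃ x ∈ Icc (0:ℝ) 1, x ≠ a ∧ y ∉ g x ∧ uIoo a x ⊆ uIoo a t ∩ ball a ε := by
  have hW : uIoo a t ∩ ball a ε ⊆ Icc 0 1 :=
    inter_subset_left.trans (uIoo_subset_uIcc_self.trans (uIcc_subset_Icc ha ht))
  obtain ⟨x, ⟨⟨hxt, hxa⟩, hx⟩, hyx⟩ := hl y _ (isOpen_Ioo.inter isOpen_ball)
    ((nonempty_uIoo_inter_ball hat hε).mono fun x hx => ⟨hx, hW hx⟩)
  refine ⟨x, hx, ?_, hyx, subset_inter ?_ ?_⟩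
  · rintro rfl
    exact left_notMem_uIoo hxt
  · exact uIoo_subset_Ioo left_mem_uIcc (uIoo_subset_uIcc_self hxt)
  · rw [Real.ball_eq_Ioo] at hxa ⊢
    exact uIoo_subset_Ioo ⟨by linarith, by linarith⟩ (Ioo_subset_Icc_self hxa)

lemma AlmostNonfissile.svGraph_subset (hanf : AlmostNonfissile g) {A : Set (ℝ × ℝ)}
    (hA : IsClosed A) (hAg : ∀ p ∈ A, p.2 ∈ g p.1) (hfst : Icc 0 1 ⊆ Prod.fst '' A) :
    SVGraph g ⊆ A := by
  refine hanf.trans (hA.closure_subset_iff.2 ?_)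
  rintro ⟨x, y⟩ ⟨⟨hx, -⟩, hsing⟩
  obtain ⟨⟨x', y'⟩, hp, rfl : x' = x⟩ := hfst hx
  have hy' : y' ∈ g x' := hAg _ hp
  rw [hsing, mem_singleton_iff] at hy'
  rwa [hy'] at hp

lemma Icc_subset_image_eval_of_succ (hsurj : Surj g) (hanf : AlmostNonfissile g)
    {K : Set (ℕ → ℝ)} (hK : IsCompact K) {i : ℕ} (hKg : ∀ z ∈ K, z i ∈ g (z (i + 1)))
    (hfull : Icc 0 1 ⊆ (fun z : ℕ → ℝ => z (i + 1)) '' K) :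
    Icc 0 1 ⊆ (fun z : ℕ → ℝ => z i) '' K := by
  set A := (fun z : ℕ → ℝ => (z (i + 1), z i)) '' K
  have hA : IsClosed A := (hK.image (by fun_prop)).isClosed
  have hgA : SVGraph g ⊆ A := hanf.svGraph_subset hA (by rintro _ ⟨z, hz, rfl⟩; exact hKg z hz)
    (by rwa [image_image])
  intro y hy
  obtain ⟨x, hx, hyx⟩ := hsurj y hy
  obtain ⟨z, hz, hzxy⟩ := hgA (show (x, y) ∈ SVGraph g from ⟨hx, hyx⟩)
  exact ⟨z, hz, congrArg Prod.snd hzxy⟩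

end SetValued

-- `V ⊆ uIoo (w n) t` strengthens the induction so that the next level can apply the IVP.
lemma exists_isOpen_forall_dist_lt {f : ℕ → ℝ → Set ℝ} (husc : ∀ n, USC (f n))
    (hl : ∀ n, Light (f n)) (hanf : ∀ n, AlmostNonfissile (f n)) (hivp : ∀ n, IVP (f n))
    {w : ℕ → ℝ} (hw : w ∈ invLimSeq f) {ε : ℝ} (hε : 0 < ε) (n : ℕ) {t : ℝ}
    (ht : t ∈ Icc (0:ℝ) 1) (htw : t ≠ w n) :
    ∃ V, IsOpen V ∧ V.Nonempty ∧ V ⊆ uIoo (w n) t ∧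
      ∀ z ∈ invLimSeq f, z n ∈ V → ∀ j ≤ n, dist (z j) (w j) < ε := by
  induction n generalizing t with
  | zero =>
    refine ⟨uIoo (w 0) t ∩ ball (w 0) ε, isOpen_Ioo.inter isOpen_ball,
      nonempty_uIoo_inter_ball htw.symm hε, inter_subset_left, fun z _ hz j hj => ?_⟩
    rw [Nat.le_zero.1 hj]
    exact hz.2
  | succ n ih =>
    obtain ⟨x, hx, hxw, hwx, hxt⟩ :=
      (hl (n + 1)).exists_notMem_uIoo_subset (hw.1 (n + 1)) ht htw.symm hε (w n)
    obtain ⟨⟨y, hy⟩, hyI, -⟩ := (husc (n + 1)).1 x hx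
    obtain ⟨V, hV, hVne, hVy, hVclose⟩ := ih (hyI hy) fun h => hwx (h ▸ hy)
    obtain ⟨O, hO, hOne, hOx, hOV⟩ := exists_isOpen_subset_uIoo_forall_subset (husc (n + 1))
      (hanf (n + 1)) (hivp (n + 1)) (hw.1 (n + 1)) hx hxw.symm (hw.2 n) hy hV hVne hVy
    refine ⟨O, hO, hOne, fun v hv => (hxt (hOx hv)).1, fun z hz hzO j hj => ?_⟩
    rcases Nat.of_le_succ hj with hj | rfl
    · exact hVclose z hz (hOV _ hzO (hz.2 n)) j hj
    · exact (hxt (hOx hzO)).2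

lemma mem_closure_of_forall_dist_lt {K : Set (ℕ → ℝ)} {w : ℕ → ℝ}
    (h : ∀ n, ∀ ε > 0, ∃ z ∈ K, ∀ j ≤ n, dist (z j) (w j) < ε) : w ∈ closure K := by
  choose z hzK hz using fun m : ℕ => h m (1 / ((m : ℝ) + 1)) (by positivity)
  refine mem_closure_of_tendsto (tendsto_pi_nhds.2 fun i => ?_)
    (Eventually.of_forall (f := atTop) hzK)
  refine tendsto_iff_dist_tendsto_zero.2 (squeeze_zero' (Eventually.of_forall fun _ => dist_nonneg)
    ?_ tendsto_one_div_add_atTop_nhds_zero_nat)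
  filter_upwards [eventually_ge_atTop i] with m him
  exact (hz m i him).le

/-- the inverse limit of surjective, light, almost nonfissile usc
maps with the IVP has the full-projection property. -/
theorem stmt17 (f : ℕ → ℝ → Set ℝ)
    (husc : ∀ n, USC (f n)) (hsurj : ∀ n, Surj (f n))
    (hl : ∀ n, Light (f n)) (hanf : ∀ n, AlmostNonfissile (f n))
    (hivp : ∀ n, IVP (f n)) :
    ∀ K ⊆ {z : ℕ → ℝ | (∀ i, z i ∈ Icc (0:ℝ) 1) ∧
        ∀ i, z i ∈ f (i + 1) (z (i + 1))},
      IsCompact K → IsConnected K →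
      {i : ℕ | (fun z : ℕ → ℝ => z i) '' K = Icc (0:ℝ) 1}.Infinite →
      K = {z : ℕ → ℝ | (∀ i, z i ∈ Icc (0:ℝ) 1) ∧
        ∀ i, z i ∈ f (i + 1) (z (i + 1))} := by
  intro K hKX hK _ hinf
  have hfull : ∀ i, Icc 0 1 ⊆ (fun z : ℕ → ℝ => z i) '' K :=
    Nat.decreasing_induction_of_infinite
      (fun i => Icc_subset_image_eval_of_succ (hsurj (i + 1)) (hanf (i + 1)) hK
        fun z hz => (hKX hz).2 i)
      (hinf.mono fun i hi => hi.ge)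
  refine hKX.antisymm fun w hw => hK.isClosed.closure_subset <|
    mem_closure_of_forall_dist_lt fun n ε hε => ?_
  obtain ⟨t, ht, htw⟩ : ∃ t ∈ Icc (0:ℝ) 1, t ≠ w n := by
    rcases eq_or_ne (w n) 0 with h | h
    · exact ⟨1, right_mem_Icc.2 zero_le_one, by rw [h]; exact one_ne_zero⟩
    · exact ⟨0, left_mem_Icc.2 zero_le_one, Ne.symm h⟩
  obtain ⟨V, -, ⟨v, hv⟩, hVt, hVclose⟩ :=
    exists_isOpen_forall_dist_lt husc hl hanf hivp hw hε n ht htw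
  obtain ⟨z, hz, rfl⟩ :=
    hfull n (uIoo_subset_uIcc_self.trans (uIcc_subset_Icc (hw.1 n) ht) (hVt hv))
  exact ⟨z, hz, hVclose z (hKX hz) hv⟩
end

section
/- Let f : [0,1] → 2^[0,1] be upper semicontinuous with the intermediate value property, and let n ≥ 1, y ∈ (0,1) with f^n(y) = [c,d] and c < y < d. Then there exists a sequence {p_i} with p_i < y, p_i → y, and y ∈ f^n(p_i) for all i. -/
open Set Filter Topology

/-!
The values of an upper semicontinuous map with the intermediate value property are intervals:
a point strictly between two values at `z` is, by the intermediate value property, a value at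
points arbitrarily close to `z`, hence lies in the closed graph. This lets the intermediate value
property pass to compositions, hence to `f^n`. Now for `q < y` and any `w ∈ f^n(q)`, either
`w = y` or `y` lies strictly between `w` and one of `c, d ∈ f^n(y)`, so `y` is a value of `f^n`
on `[q, y)`.
-/

def NonemptyUnitValued (f : ℝ → Set ℝ) : Prop :=
  ∀ x ∈ Icc (0:ℝ) 1, (f x).Nonempty ∧ f x ⊆ Icc 0 1

section

variable {f h : ℝ → Set ℝ}

lemma USC.nonemptyUnitValued (hf : USC f) : NonemptyUnitValued f :=
  fun x hx => ⟨(hf.1 x hx).1, (hf.1 x hx).2.1⟩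

lemma NonemptyUnitValued.comp (hf : NonemptyUnitValued f) (hh : NonemptyUnitValued h) :
    NonemptyUnitValued (fun x => ⋃ z ∈ h x, f z) := by
  intro x hx
  obtain ⟨z, hz⟩ := (hh x hx).1
  obtain ⟨w, hw⟩ := (hf z ((hh x hx).2 hz)).1
  refine ⟨⟨w, mem_biUnion hz hw⟩, iUnion₂_subset fun z hz => (hf z ((hh x hx).2 hz)).2⟩

lemma nonemptyUnitValued_fIter (hf : NonemptyUnitValued f) :
    ∀ n, NonemptyUnitValued (fIter f n)
  | 0 => fun x hx => ⟨singleton_nonempty x, singleton_subset_iff.2 hx⟩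
  | n + 1 => hf.comp (nonemptyUnitValued_fIter hf n)

lemma IVP.exists_eq_or_mem_uIoo (hivp : IVP f) {z z' a b v : ℝ} (hz : z ∈ Icc (0:ℝ) 1)
    (hz' : z' ∈ Icc (0:ℝ) 1) (hzz' : z' ≠ z) (hfz' : (f z').Nonempty)
    (ha : a ∈ f z) (hb : b ∈ f z) (hv : v ∈ uIoo a b) :
    ∃ t, (t = z' ∨ t ∈ uIoo z' z) ∧ v ∈ f t := by
  obtain ⟨w, hw⟩ := hfz'
  rcases lt_trichotomy w v with hwv | rfl | hvw
  · have hmax : a ⊔ b ∈ f z := by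
      rcases max_choice a b with h | h <;> rwa [h]
    obtain ⟨t, ht, hvt⟩ := hivp z' hz' z hz hzz' w hw _ hmax (hwv.trans hv.2).ne
      v (mem_uIoo_of_lt hwv hv.2)
    exact ⟨t, Or.inr ht, hvt⟩
  · exact ⟨z', Or.inl rfl, hw⟩
  · have hmin : a ⊓ b ∈ f z := by
      rcases min_choice a b with h | h <;> rwa [h]
    obtain ⟨t, ht, hvt⟩ := hivp z' hz' z hz hzz' w hw _ hmin (hv.1.trans hvw).ne'
      v (mem_uIoo_of_gt hv.1 hvw)
    exact ⟨t, Or.inr ht, hvt⟩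

lemma Icc_subset_closure_Icc_diff_singleton (z : ℝ) :
    Icc (0:ℝ) 1 ⊆ closure (Icc 0 1 \ {z}) := by
  calc Icc (0:ℝ) 1 = closure (Ioo 0 1) := (closure_Ioo zero_ne_one).symm
    _ ⊆ closure (Ioo 0 1 ∩ {z}ᶜ) := closure_minimal
      ((dense_compl_singleton z).open_subset_closure_inter isOpen_Ioo) isClosed_closure
    _ ⊆ closure (Icc 0 1 \ {z}) := closure_mono (inter_subset_inter_left _ Ioo_subset_Icc_self)

lemma IVP.ordConnected (hf : USC f) (hivp : IVP f) {z : ℝ} (hz : z ∈ Icc (0:ℝ) 1) :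
    (f z).OrdConnected := by
  refine ⟨fun a ha b hb v hv => ?_⟩
  rcases hv.1.eq_or_lt with rfl | hav
  · exact ha
  rcases hv.2.eq_or_lt with rfl | hvb
  · exact hb
  suffices (z, v) ∈ closure (SVGraph f) by
    rw [hf.2.closure_eq] at this
    exact this.2
  refine Metric.mem_closure_iff.2 fun ε hε => ?_
  obtain ⟨z', ⟨hz', hzz'⟩, hdist⟩ :=
    Metric.mem_closure_iff.1 (Icc_subset_closure_Icc_diff_singleton z hz) ε hε
  obtain ⟨t, ht, hvt⟩ := hivp.exists_eq_or_mem_uIoo hz hz' hzz' (hf.1 z' hz').1 ha hb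
    (mem_uIoo_of_lt hav hvb)
  have htu : t ∈ uIcc z' z := ht.elim (· ▸ left_mem_uIcc) (uIoo_subset_uIcc_self ·)
  refine ⟨(t, v), ⟨uIcc_subset_Icc hz' hz htu, hvt⟩, ?_⟩
  rw [Prod.dist_eq, dist_self, max_eq_left dist_nonneg]
  calc dist z t = |z - t| := Real.dist_eq z t
    _ ≤ |z - z'| := abs_sub_right_of_mem_uIcc htu
    _ < ε := hdist

lemma IVP.comp (hf : USC f) (hivp : IVP f) (hh : NonemptyUnitValued h) (hivp_h : IVP h) :
    IVP (fun x => ⋃ z ∈ h x, f z) := by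
  intro x₁ hx₁ x₂ hx₂ hx y₁ hy₁ y₂ hy₂ hy v hv
  simp only [mem_iUnion₂] at hy₁ hy₂
  obtain ⟨z₁, hz₁, hy₁⟩ := hy₁
  obtain ⟨z₂, hz₂, hy₂⟩ := hy₂
  have hz₁I := (hh x₁ hx₁).2 hz₁
  rcases ne_or_eq z₁ z₂ with hz | rfl
  · obtain ⟨t, ht, hvt⟩ := hivp z₁ hz₁I z₂ ((hh x₂ hx₂).2 hz₂) hz y₁ hy₁ y₂ hy₂ hy v hv
    obtain ⟨x, hx, htx⟩ := hivp_h x₁ hx₁ x₂ hx₂ hx z₁ hz₁ z₂ hz₂ hz t ht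
    exact ⟨x, hx, mem_biUnion htx hvt⟩
  -- The IVP of `h` says nothing about `z₁` alone: pass through a value `z₃` of `h` at a point
  -- `m` between `x₁` and `x₂`.
  obtain ⟨m, hm⟩ := nonempty_uIoo.2 hx
  have hmI : m ∈ Icc (0:ℝ) 1 := uIcc_subset_Icc hx₁ hx₂ (uIoo_subset_uIcc_self hm)
  obtain ⟨z₃, hz₃⟩ := (hh m hmI).1
  have hz₃I := (hh m hmI).2 hz₃
  rcases eq_or_ne z₃ z₁ with rfl | hz₃₁
  · exact ⟨m, hm, mem_biUnion hz₃
      ((hivp.ordConnected hf hz₃I).uIcc_subset hy₁ hy₂ (uIoo_subset_uIcc_self hv))⟩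
  obtain ⟨t, rfl | ht, hvt⟩ := hivp.exists_eq_or_mem_uIoo hz₁I hz₃I hz₃₁ (hf.1 z₃ hz₃I).1
    hy₁ hy₂ hv
  · exact ⟨m, hm, mem_biUnion hz₃ hvt⟩
  have hmx₁ : m ≠ x₁ := fun h => left_notMem_uIoo (h ▸ hm)
  obtain ⟨x, hx, htx⟩ := hivp_h m hmI x₁ hx₁ hmx₁ z₃ hz₃ z₁ hz₁ hz₃₁ t ht
  exact ⟨x, uIoo_subset_Ioo (Ioo_subset_Icc_self hm) ⟨inf_le_left, le_sup_left⟩ hx,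
    mem_biUnion htx hvt⟩

lemma ivp_fIter (hf : USC f) (hivp : IVP f) : ∀ n, IVP (fIter f n)
  | 0 => by
    rintro x₁ - x₂ - - y₁ rfl y₂ rfl - v hv
    exact ⟨v, hv, rfl⟩
  | n + 1 => hivp.comp hf (nonemptyUnitValued_fIter hf.nonemptyUnitValued n) (ivp_fIter hf hivp n)

lemma IVP.frequently_nhdsLT_mem (hivp : IVP f) (hf : ∀ x ∈ Icc (0:ℝ) 1, (f x).Nonempty)
    {y c d v : ℝ} (hy : y ∈ Ioc (0:ℝ) 1) (hc : c ∈ f y) (hd : d ∈ f y) (hv : v ∈ uIoo c d) :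
    ∃ᶠ x in 𝓝[<] y, v ∈ f x := by
  refine (nhdsLT_basis y).frequently_iff.2 fun q hq => ?_
  set q' := max ((q + y) / 2) 0
  have hq' : q' ∈ Ioo q y :=
    ⟨lt_max_of_lt_left (by linarith), max_lt (by linarith) hy.1⟩
  have hq'I : q' ∈ Icc (0:ℝ) 1 := ⟨le_max_right _ _, hq'.2.le.trans hy.2⟩
  obtain ⟨x, rfl | hx, hvx⟩ := hivp.exists_eq_or_mem_uIoo (Ioc_subset_Icc_self hy) hq'I
    hq'.2.ne (hf q' hq'I) hc hd hv
  · exact ⟨q', hq', hvx⟩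
  · rw [uIoo_of_lt hq'.2] at hx
    exact ⟨x, ⟨hq'.1.trans hx.1, hx.2⟩, hvx⟩

end

theorem stmt19_general (f : ℝ → Set ℝ) (hf : USC f) (hivp : IVP f)
    (n : ℕ) (y : ℝ) (hy : y ∈ Ioo (0:ℝ) 1)
    (c d : ℝ) (hfy : fIter f n y = Icc c d) (hcy : c < y) (hyd : y < d) :
    ∃ p : ℕ → ℝ, (∀ i, p i < y) ∧ Tendsto p atTop (𝓝 y) ∧
      ∀ i, y ∈ fIter f n (p i) := by
  have hcd : c ≤ d := (hcy.trans hyd).le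
  have hc : c ∈ fIter f n y := hfy ▸ left_mem_Icc.2 hcd
  have hd : d ∈ fIter f n y := hfy ▸ right_mem_Icc.2 hcd
  have hfreq : ∃ᶠ x in 𝓝[<] y, y ∈ fIter f n x ∧ x < y :=
    ((ivp_fIter hf hivp n).frequently_nhdsLT_mem
      (fun x hx => (nonemptyUnitValued_fIter hf.nonemptyUnitValued n x hx).1)
      (Ioo_subset_Ioc_self hy) hc hd (mem_uIoo_of_lt hcy hyd)).and_eventually self_mem_nhdsWithin
  obtain ⟨p, hp, hpy⟩ := exists_seq_forall_of_frequently hfreq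
  exact ⟨p, fun i => (hpy i).2, tendsto_nhds_of_tendsto_nhdsWithin hp, fun i => (hpy i).1⟩

/-- if `f^n(y) = [c,d]` with `c < y < d`, there is a sequence
`p_i < y`, `p_i → y`, with `y ∈ f^n(p_i)` for all `i`. -/
theorem stmt19 (f : ℝ → Set ℝ) (hf : USC f) (hivp : IVP f)
    (n : ℕ) (hn : 1 ≤ n) (y : ℝ) (hy : y ∈ Ioo (0:ℝ) 1)
    (c d : ℝ) (hfy : fIter f n y = Icc c d) (hcy : c < y) (hyd : y < d) :
    ∃ p : ℕ → ℝ, (∀ i, p i < y) ∧ Tendsto p atTop (𝓝 y) ∧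
      ∀ i, y ∈ fIter f n (p i) :=
  stmt19_general f hf hivp n y hy c d hfy hcy hyd
end
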